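/- Let k = 2^t for some odd integer t ≥ 7, let m = √(2k), and let n = km/4 − k = (k/2)^{3/2} − k. Let L be a graph of order n that is a vertex-disjoint union of n/m copies of the complete graph K_m. Then there is a partial k-star decomposition of the complete graph K_n whose leave is L, the binomial coefficient C(n+k, 2) is divisible by k, and yet there is no k-star decomposition of the join L ∨ K_k (so this partial decomposition cannot be embedded in a k-star decomposition of K_{n+k}). -/

import Mathlib

/-- The star with centre `c` and leaf set `Lf` is a `k`-star in `G`. -/
def IsStarIn {V : Type*} (G : SimpleGraph V) (k : ℕ) (c : V) (Lf : Finset V) : Prop :=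
  Lf.card = k ∧ ∀ v ∈ Lf, G.Adj c v

/-- The edge set of the star with centre `c` and leaf set `Lf`. -/
def starEdges {V : Type*} [DecidableEq V] (c : V) (Lf : Finset V) : Finset (Sym2 V) :=
  Lf.image (fun v => s(c, v))

/-- A partial `k`-star decomposition of `G`: a set of `k`-stars of `G` whose edge sets are
pairwise disjoint. -/
def IsPartialStarDecompOn {V : Type*} [DecidableEq V] (G : SimpleGraph V) (k : ℕ)
    (D : Finset (V × Finset V)) : Prop :=
  (∀ p ∈ D, IsStarIn G k p.1 p.2) ∧
  (∀ p ∈ D, ∀ q ∈ D, p ≠ q → Disjoint (starEdges p.1 p.2) (starEdges q.1 q.2))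

/-- A `k`-star decomposition of `G`: a partial one whose stars' edge sets cover `E(G)`. -/
def IsStarDecompOn {V : Type*} [DecidableEq V] (G : SimpleGraph V) (k : ℕ)
    (D : Finset (V × Finset V)) : Prop :=
  IsPartialStarDecompOn G k D ∧ ∀ e ∈ G.edgeSet, ∃ p ∈ D, e ∈ starEdges p.1 p.2

/-- The leave of a partial star decomposition `D` of `G`: the graph on `V(G)` consisting of
the edges of `G` lying in no star of `D`. -/
def leaveOf {V : Type*} [DecidableEq V] (G : SimpleGraph V) (D : Finset (V × Finset V)) :
    SimpleGraph V :=
  G.deleteEdges ↑(D.biUnion fun p => starEdges p.1 p.2)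

/-- The join `L ∨ K_s` of `L` with a complete graph on `s` new vertices. -/
def joinK {V : Type*} (L : SimpleGraph V) (s : ℕ) : SimpleGraph (V ⊕ Fin s) where
  Adj x y := x ≠ y ∧ ∀ a b, x = Sum.inl a → y = Sum.inl b → L.Adj a b
  symm := by
    constructor
    rintro x y ⟨hxy, h⟩
    exact ⟨hxy.symm, fun a b ha hb => (h b a hb ha).symm⟩
  loopless := by constructor; rintro x ⟨h, -⟩; exact h rfl

/-- The independence number `α(L)` of a graph `L`. -/
noncomputable def indepNumber {V : Type*} [Fintype V] (L : SimpleGraph V) : ℕ :=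
  sSup {m : ℕ | ∃ t : Finset V, t.card = m ∧ ∀ x ∈ t, ∀ y ∈ t, x ≠ y → ¬ L.Adj x y}

/-- Push a star on `Fin n` forward to `Fin N` along the canonical inclusion. -/
def castStar {n N : ℕ} (h : n ≤ N) (p : Fin n × Finset (Fin n)) :
    Fin N × Finset (Fin N) :=
  (Fin.castLE h p.1, p.2.image (Fin.castLE h))

/-- The partial `k`-star decomposition `A` of `K_n` can be embedded in a `k`-star
decomposition of `K_{n+s}`. -/
def EmbedsIn (k n s : ℕ) (A : Finset (Fin n × Finset (Fin n))) : Prop :=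
  ∃ B : Finset (Fin (n + s) × Finset (Fin (n + s))),
    IsStarDecompOn (⊤ : SimpleGraph (Fin (n + s))) k B ∧
    A.image (castStar (Nat.le_add_right n s)) ⊆ B

/-- `Δ_T = |E_T| - k·∑_{x∈T} γ(x)`, where `E_T` is the set of edges of `G` incident with at
least one vertex of `T`. -/
noncomputable def starDelta {V : Type*} (G : SimpleGraph V) (k : ℕ) (γ : V → ℕ)
    (T : Finset V) : ℤ :=
  ({e ∈ G.edgeSet | ∃ v ∈ T, v ∈ e}.ncard : ℤ) - k * ∑ x ∈ T, γ x

/-!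
Write `k = 2h²` and `m = 2h`; then `n = Qk` with `Q = h/2 - 1` odd.

An orientation of the complement of `L` in which every out-degree is a multiple of `k` gives a
partial `k`-star decomposition of `K_n` with leave `L`: cut each out-neighbourhood into
`k`-sets. Group the `n/m` cliques into `Q` chunks of `h` cliques (`k` vertices each),
indexed by `ZMod Q`. Split every clique into two halves; inside a chunk, between two cliques,
each vertex of the earlier clique points to the opposite half of the later one and each vertex
of the later clique to its own half of the earlier one, so every out-degree is `h(h-1)`. The
chunks are oriented by the rotational tournament of `ZMod Q` (chunk `c` points to `c + d` for
`1 ≤ d ≤ Q/2`), except that from chunk `c` to chunk `c + 1` only the arcs into a fixed set `S`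
of `k - h(h-1)` positions go forward. A vertex then has `h(h-1)` out-arcs in its own chunk,
`|S|` into the next one, `0` or `k` into the previous one and `k` into each other chunk ahead,
so all out-degrees are multiples of `k`.

In a `k`-star decomposition of `L ∨ K_k` every edge has a centre among its ends, so the
non-centres are independent: at most one vertex of each clique and one of `K_k`. Hence
`k (n + k - n/m - 1) ≤ |E(L ∨ K_k)| = n(m-1)/2 + nk + k(k-1)/2`, which fails for these
parameters. Finally `n + k = km/4` is a multiple of `2k`, so `k ∣ C(n+k, 2)`.
-/

open Finset

section StarDecomposition

variable {V : Type*} [DecidableEq V]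

lemma mem_starEdges {c x y : V} {Lf : Finset V} :
    s(x, y) ∈ starEdges c Lf ↔ c = x ∧ y ∈ Lf ∨ c = y ∧ x ∈ Lf := by
  simp only [starEdges, mem_image, Sym2.eq_iff]
  constructor
  · rintro ⟨v, hv, ⟨rfl, rfl⟩ | ⟨rfl, rfl⟩⟩
    exacts [Or.inl ⟨rfl, hv⟩, Or.inr ⟨rfl, hv⟩]
  · rintro (⟨rfl, hy⟩ | ⟨rfl, hx⟩)
    exacts [⟨y, hy, Or.inl ⟨rfl, rfl⟩⟩, ⟨x, hx, Or.inr ⟨rfl, rfl⟩⟩]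

lemma card_starEdges (c : V) (Lf : Finset V) : #(starEdges c Lf) = #Lf :=
  card_image_of_injective _ fun _ _ => Sym2.congr_right.1

namespace IsStarDecompOn

variable [Fintype V] {G : SimpleGraph V} {k : ℕ} {D : Finset (V × Finset V)}

lemma biUnion_starEdges_eq [DecidableRel G.Adj] (hD : IsStarDecompOn G k D) :
    D.biUnion (fun p => starEdges p.1 p.2) = G.edgeFinset := by
  ext e
  simp only [mem_biUnion, SimpleGraph.mem_edgeFinset]
  refine ⟨?_, hD.2 e⟩
  rintro ⟨p, hp, he⟩
  obtain ⟨v, hv, rfl⟩ := mem_image.1 he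
  exact (hD.1.1 p hp).2 v hv

lemma mul_card_eq_card_edgeFinset [DecidableRel G.Adj] (hD : IsStarDecompOn G k D) :
    k * #D = #G.edgeFinset := by
  rw [← hD.biUnion_starEdges_eq, card_biUnion hD.1.2,
    sum_congr rfl fun p hp => (card_starEdges p.1 p.2).trans (hD.1.1 p hp).1, sum_const,
    smul_eq_mul, mul_comm]

lemma isIndepSet_compl_image_fst (hD : IsStarDecompOn G k D) :
    G.IsIndepSet ↑(D.image Prod.fst)ᶜ := by
  intro x hx y hy _ hxy
  obtain ⟨p, hp, he⟩ := hD.2 s(x, y) hxy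
  rcases mem_starEdges.1 he with ⟨rfl, -⟩ | ⟨rfl, -⟩
  · exact mem_compl.1 hx (mem_image_of_mem _ hp)
  · exact mem_compl.1 hy (mem_image_of_mem _ hp)

lemma mul_card_le_card_edgeFinset_add_mul [DecidableRel G.Adj] (hD : IsStarDecompOn G k D)
    {a : ℕ} (ha : ∀ T : Finset V, G.IsIndepSet T → #T ≤ a) :
    k * Fintype.card V ≤ #G.edgeFinset + k * a := by
  have hcentres : #(D.image Prod.fst) ≤ #D := card_image_le
  have hrest := ha _ hD.isIndepSet_compl_image_fst
  rw [← card_add_card_compl (D.image Prod.fst), ← hD.mul_card_eq_card_edgeFinset, mul_add]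
  gcongr

end IsStarDecompOn

end StarDecomposition

section Join

variable {V : Type*} {L : SimpleGraph V} {s : ℕ}

@[simp] lemma joinK_adj_inl_inl {a b : V} : (joinK L s).Adj (.inl a) (.inl b) ↔ L.Adj a b := by
  refine ⟨fun h => h.2 a b rfl rfl, fun h => ⟨by simpa using h.ne, ?_⟩⟩
  rintro a' b' ⟨⟩ ⟨⟩
  exact h

@[simp] lemma joinK_adj_inl_inr {a : V} {b : Fin s} : (joinK L s).Adj (.inl a) (.inr b) :=
  ⟨Sum.inl_ne_inr, by simp⟩

@[simp] lemma joinK_adj_inr_inl {a : V} {b : Fin s} : (joinK L s).Adj (.inr b) (.inl a) :=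
  joinK_adj_inl_inr.symm

@[simp] lemma joinK_adj_inr_inr {b c : Fin s} : (joinK L s).Adj (.inr b) (.inr c) ↔ b ≠ c :=
  ⟨fun h => by simpa using h.1, fun h => ⟨by simpa using h, by simp⟩⟩

lemma card_le_of_isIndepSet_joinK {a : ℕ} (ha : ∀ T : Finset V, L.IsIndepSet T → #T ≤ a)
    {T : Finset (V ⊕ Fin s)} (hT : (joinK L s).IsIndepSet T) : #T ≤ a + 1 := by
  rw [← card_toLeft_add_card_toRight]
  gcongr
  · refine ha _ fun x hx y hy hxy => ?_
    simpa using hT (mem_toLeft.1 hx) (mem_toLeft.1 hy) (by simpa using hxy)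
  · refine card_le_one.2 fun b hb c hc => ?_
    by_contra hbc
    exact hT (mem_toRight.1 hb) (mem_toRight.1 hc) (by simpa using hbc) (by simpa using hbc)

variable [Fintype V] [DecidableRel (joinK L s).Adj]

lemma degree_joinK_inl [DecidableRel L.Adj] (a : V) :
    (joinK L s).degree (.inl a) = L.degree a + s := by
  rw [← SimpleGraph.card_neighborFinset_eq_degree, ← SimpleGraph.card_neighborFinset_eq_degree,
    show (joinK L s).neighborFinset (.inl a) = (L.neighborFinset a).disjSum univ by
      ext (x | x) <;> simp]
  simp

lemma degree_joinK_inr (b : Fin s) :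
    (joinK L s).degree (.inr b) = Fintype.card V + (s - 1) := by
  rw [← SimpleGraph.card_neighborFinset_eq_degree,
    show (joinK L s).neighborFinset (.inr b) = univ.disjSum (univ.erase b) by
      ext (x | x) <;> simp [eq_comm]]
  simp

lemma two_mul_card_edgeFinset_joinK [DecidableRel L.Adj] :
    2 * #(joinK L s).edgeFinset + s = 2 * #L.edgeFinset + s * (2 * Fintype.card V + s) := by
  rw [← SimpleGraph.sum_degrees_eq_twice_card_edges,
    ← SimpleGraph.sum_degrees_eq_twice_card_edges, Fintype.sum_sum_type]
  simp only [degree_joinK_inl, degree_joinK_inr, sum_add_distrib, sum_const, card_univ,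
    Fintype.card_fin, smul_eq_mul]
  rcases s with _ | s
  · simp
  · simp only [Nat.add_sub_cancel]
    ring

end Join

section Cliques

variable {n m : ℕ} {L : SimpleGraph (Fin n)}

lemma card_filter_div_eq_le (hm : 0 < m) (c : ℕ) : #{b : Fin n | b.val / m = c} ≤ m := by
  simpa using card_le_card_of_injOn (t := range m) (fun b : Fin n => b.val % m)
    (fun b _ => mem_range.2 (Nat.mod_lt _ hm))
    fun b hb b' hb' hbb' => Fin.ext (Nat.ext_div_mod ((mem_filter.1 hb).2.trans
      (mem_filter.1 hb').2.symm) hbb')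

lemma degree_lt_of_adj_iff [DecidableRel L.Adj]
    (hL : ∀ x y : Fin n, L.Adj x y ↔ x ≠ y ∧ x.val / m = y.val / m) (hm : 0 < m)
    (a : Fin n) : L.degree a < m := by
  rw [← SimpleGraph.card_neighborFinset_eq_degree]
  refine lt_of_lt_of_le (card_lt_card ⟨fun b hb => ?_, fun h => ?_⟩)
    (card_filter_div_eq_le hm (a.val / m))
  · simp_all
  · simpa using h (by simp : a ∈ ({b : Fin n | b.val / m = a.val / m} : Finset _))

lemma card_le_of_isIndepSet_of_adj_iff
    (hL : ∀ x y : Fin n, L.Adj x y ↔ x ≠ y ∧ x.val / m = y.val / m) (hmn : m ∣ n)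
    {T : Finset (Fin n)} (hT : L.IsIndepSet T) : #T ≤ n / m := by
  simpa using card_le_card_of_injOn (t := range (n / m)) (fun b : Fin n => b.val / m)
    (fun b _ => mem_range.2 (Nat.div_lt_div_of_lt_of_dvd hmn b.isLt))
    fun b hb b' hb' hbb' => by_contra fun hne => hT hb hb' hne ((hL b b').2 ⟨hne, hbb'⟩)

end Cliques

theorem not_exists_isStarDecompOn_joinK {n m k : ℕ} (hm : m * m = 2 * k)
    (hn : 4 * (n + k) = k * m) (hk : 0 < k) (hmn : m ∣ n) (L : SimpleGraph (Fin n))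
    (hL : ∀ x y : Fin n, L.Adj x y ↔ x ≠ y ∧ x.val / m = y.val / m) :
    ¬ ∃ D, IsStarDecompOn (joinK L k) k D := by
  classical
  rintro ⟨D, hD⟩
  have hm0 : 0 < m := Nat.pos_of_ne_zero (by rintro rfl; omega)
  have hstars := hD.mul_card_le_card_edgeFinset_add_mul fun T hT =>
    card_le_of_isIndepSet_joinK (fun T hT => card_le_of_isIndepSet_of_adj_iff hL hmn hT) hT
  have hjoin := two_mul_card_edgeFinset_joinK (L := L) (s := k)
  have hleave : 2 * #L.edgeFinset + n ≤ n * m := by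
    rw [← SimpleGraph.sum_degrees_eq_twice_card_edges]
    have := sum_le_sum fun a (_ : a ∈ (univ : Finset (Fin n))) =>
      Nat.succ_le_of_lt (degree_lt_of_adj_iff hL hm0 a)
    simpa [sum_add_distrib, mul_comm] using this
  obtain ⟨B, rfl⟩ := hmn
  simp only [Fintype.card_sum, Fintype.card_fin, Nat.mul_div_cancel_left B hm0] at hstars hjoin
  nlinarith

lemma Finset.exists_finpartition_card_eq_of_dvd {α : Type*} [DecidableEq α] {s : Finset α}
    {k : ℕ} (hk : k ∣ #s) : ∃ P : Finpartition s, ∀ t ∈ P.parts, #t = k := by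
  obtain ⟨a, ha⟩ := hk
  have hs : a * k + 0 * (k + 1) = #s := by rw [ha]; ring
  refine ⟨(⊥ : Finpartition s).equitabilise hs, fun t ht => ?_⟩
  refine (Finpartition.card_eq_of_mem_parts_equitabilise ht).resolve_right fun hbig => ?_
  have hnone := card_eq_zero.1 (Finpartition.card_filter_equitabilise_big (⊥ : Finpartition s) hs)
  have hmem : t ∈ {u ∈ ((⊥ : Finpartition s).equitabilise hs).parts | #u = k + 1} :=
    mem_filter.2 ⟨ht, hbig⟩
  simp [hnone] at hmem

theorem exists_isPartialStarDecompOn_top_of_orientation {V : Type*} [Fintype V] [DecidableEq V]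
    (k : ℕ) (O : V → V → Prop) [DecidableRel O] (hO : ∀ x y, O x y → ¬O y x)
    (hk : ∀ x, k ∣ #{y | O x y}) :
    ∃ D, IsPartialStarDecompOn ⊤ k D ∧
      ∀ x y, (leaveOf ⊤ D).Adj x y ↔ x ≠ y ∧ ¬O x y ∧ ¬O y x := by
  choose P hP using fun x => Finset.exists_finpartition_card_eq_of_dvd (hk x)
  set D := univ.biUnion fun x => (P x).parts.image (Prod.mk x)
  have hmemD : ∀ p, p ∈ D ↔ p.2 ∈ (P p.1).parts := by
    rintro ⟨x, t⟩
    simp [D]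
  have hout : ∀ p ∈ D, ∀ v ∈ p.2, O p.1 v := fun p hp v hv => by
    simpa using (P p.1).le ((hmemD p).1 hp) hv
  have hcover (x y : V) :
      s(x, y) ∈ D.biUnion (fun p => starEdges p.1 p.2) ↔ O x y ∨ O y x := by
    simp only [mem_biUnion, mem_starEdges]
    constructor
    · rintro ⟨p, hp, ⟨rfl, hy⟩ | ⟨rfl, hx⟩⟩
      exacts [Or.inl (hout p hp y hy), Or.inr (hout p hp x hx)]
    · rintro (hxy | hyx)
      · obtain ⟨t, ht, hyt⟩ := (P x).exists_mem (by simpa using hxy)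
        exact ⟨(x, t), (hmemD _).2 ht, Or.inl ⟨rfl, hyt⟩⟩
      · obtain ⟨t, ht, hxt⟩ := (P y).exists_mem (by simpa using hyx)
        exact ⟨(y, t), (hmemD _).2 ht, Or.inr ⟨rfl, hxt⟩⟩
  refine ⟨D, ⟨fun p hp => ⟨hP p.1 p.2 ((hmemD p).1 hp), fun v hv => ?_⟩, ?_⟩, ?_⟩
  · rintro rfl
    exact hO _ _ (hout p hp _ hv) (hout p hp _ hv)
  · intro p hp q hq hpq
    refine disjoint_left.2 fun e hep heq => ?_
    obtain ⟨v, hv, rfl⟩ := mem_image.1 hep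
    rcases mem_starEdges.1 heq with ⟨hqp, hvq⟩ | ⟨hqv, hpq'⟩
    · refine hpq (Prod.ext hqp.symm ((P p.1).eq_of_mem_parts ((hmemD p).1 hp) ?_ hv hvq))
      exact hqp ▸ (hmemD q).1 hq
    · exact hO _ _ (hout p hp v hv) (hqv ▸ hout q hq _ hpq')
  · intro x y
    rw [leaveOf, SimpleGraph.deleteEdges_adj, SimpleGraph.top_adj, mem_coe, hcover]
    tauto

section Multipartite

variable {h : ℕ} {α : Type*}

def halfOrient (x y : Fin h × Bool × α) : Prop :=
  x.1 ≠ y.1 ∧ (x.2.1 ≠ y.2.1 ↔ x.1 < y.1)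

instance : DecidableRel (halfOrient (h := h) (α := α)) := fun _ _ => by
  unfold halfOrient; infer_instance

lemma halfOrient_asymm {x y : Fin h × Bool × α} (hxy : halfOrient x y) : ¬halfOrient y x := by
  unfold halfOrient at *
  grind

lemma halfOrient_or_halfOrient_iff {x y : Fin h × Bool × α} :
    halfOrient x y ∨ halfOrient y x ↔ x.1 ≠ y.1 := by
  unfold halfOrient
  grind

lemma card_filter_halfOrient [Fintype α] [DecidableEq α] (x : Fin h × Bool × α) :
    #{y | halfOrient x y} = (h - 1) * Fintype.card α := by
  set f : Fin h × α → Fin h × Bool × α := fun q => (q.1, x.2.1 != decide (x.1 < q.1), q.2)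
  have hf : Function.Injective f := fun q q' hq => by
    simp only [f, Prod.mk.injEq] at hq
    exact Prod.ext hq.1 hq.2.2
  have : ({y | halfOrient x y} : Finset _) = (univ.erase x.1 ×ˢ (univ : Finset α)).image f := by
    ext ⟨j, e, b⟩
    simp only [f, mem_filter, mem_univ, true_and, mem_image, mem_product, mem_erase,
      Prod.mk.injEq, Prod.exists]
    unfold halfOrient
    constructor
    · rintro ⟨hne, hhalf⟩
      refine ⟨j, b, ⟨⟨Ne.symm hne, trivial⟩, trivial⟩, rfl, ?_, rfl⟩
      cases he : x.2.1 <;> cases e <;> simp_all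
    · rintro ⟨j, b, ⟨⟨hne, -⟩, -⟩, rfl, rfl, rfl⟩
      refine ⟨Ne.symm hne, ?_⟩
      cases x.2.1 <;> simp
  rw [this, card_image_of_injective _ hf, card_product, card_erase_of_mem (mem_univ _), card_univ,
    card_univ, Fintype.card_fin]

end Multipartite

section Cyclic

variable {Q : ℕ} [NeZero Q] {P : Type*} (R : P → P → Prop) (S : Finset P)

def cyclicOrient (x y : ZMod Q × P) : Prop :=
  if y.1 - x.1 = 0 then R x.2 y.2
  else if y.1 - x.1 = 1 then y.2 ∈ S
  else if y.1 - x.1 = -1 then x.2 ∉ S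
  else (y.1 - x.1).val ≤ Q / 2

instance [DecidableEq P] [DecidableRel R] : DecidableRel (cyclicOrient (Q := Q) R S) :=
  fun _ _ => by unfold cyclicOrient; infer_instance

variable {R S}

lemma cyclicOrient_asymm (hR : ∀ p q, R p q → ¬R q p) (hQ : 3 ≤ Q) (hodd : Odd Q)
    {x y : ZMod Q × P} (hxy : cyclicOrient R S x y) : ¬cyclicOrient R S y x := by
  have : Fact (2 < Q) := ⟨hQ⟩
  have h1 : (-1 : ZMod Q) ≠ 1 := ZMod.neg_one_ne_one
  unfold cyclicOrient at *
  rw [show x.1 - y.1 = -(y.1 - x.1) by ring]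
  generalize y.1 - x.1 = d at *
  rcases eq_or_ne d 0 with rfl | hd0
  · simp_all
  rcases eq_or_ne d 1 with rfl | hd1
  · simp_all
  rcases eq_or_ne d (-1) with rfl | hdm1
  · simp_all
  have : NeZero d := ⟨hd0⟩
  simp only [hd0, hd1, hdm1, neg_eq_iff_eq_neg, neg_zero, neg_neg, if_false,
    ZMod.val_neg_of_ne_zero] at hxy ⊢
  have := ZMod.val_lt d
  have := Nat.odd_iff.1 hodd
  omega

lemma cyclicOrient_or_cyclicOrient_iff (hQ : 3 ≤ Q) {x y : ZMod Q × P} :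
    cyclicOrient R S x y ∨ cyclicOrient R S y x ↔ x.1 ≠ y.1 ∨ R x.2 y.2 ∨ R y.2 x.2 := by
  have : Fact (2 < Q) := ⟨hQ⟩
  have h1 : (-1 : ZMod Q) ≠ 1 := ZMod.neg_one_ne_one
  unfold cyclicOrient
  rw [show x.1 - y.1 = -(y.1 - x.1) by ring, ne_comm, ← sub_ne_zero]
  generalize y.1 - x.1 = d
  rcases eq_or_ne d 0 with rfl | hd0
  · simp
  rcases eq_or_ne d 1 with rfl | hd1
  · simp_all [em]
  rcases eq_or_ne d (-1) with rfl | hdm1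
  · simp_all [or_comm, em]
  have : NeZero d := ⟨hd0⟩
  simp only [hd0, hd1, hdm1, neg_eq_iff_eq_neg, neg_zero, neg_neg, if_false,
    ZMod.val_neg_of_ne_zero, ne_eq, not_false_eq_true, true_or, iff_true]
  have := ZMod.val_lt d
  omega

lemma card_dvd_card_filter_cyclicOrient [Fintype P] [DecidableEq P] [DecidableRel R]
    (hQ : 2 ≤ Q) (hRS : ∀ p, Fintype.card P ∣ #{q | R p q} + #S) (x : ZMod Q × P) :
    Fintype.card P ∣ #{y | cyclicOrient R S x y} := by
  have : Fact (1 < Q) := ⟨hQ⟩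
  have hsum : #{y | cyclicOrient R S x y} =
      ∑ d : ZMod Q, #{q | cyclicOrient R S x (x.1 + d, q)} := by
    rw [card_filter, Fintype.sum_prod_type, ← Equiv.sum_comp (Equiv.addLeft x.1)]
    simp only [card_filter]
    rfl
  rw [hsum, ← add_sum_erase _ _ (mem_univ 0),
    ← add_sum_erase _ _ (mem_erase.2 ⟨one_ne_zero, mem_univ 1⟩), ← add_assoc]
  refine dvd_add ?_ (dvd_sum fun d hd => ?_)
  · simpa [cyclicOrient] using hRS x.2
  · obtain ⟨hd1, hd0, -⟩ := mem_erase.1 hd |>.imp_right mem_erase.1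
    simp only [cyclicOrient, add_sub_cancel_left, hd0, hd1, if_false, filter_const]
    split_ifs <;> simp

end Cyclic

def cliqueEquiv (Q h : ℕ) [NeZero Q] :
    Fin (Q * (h * (2 * h))) ≃ ZMod Q × Fin h × Bool × Fin h :=
  finProdFinEquiv.symm.trans <| (ZMod.finEquiv Q).toEquiv.prodCongr <|
    finProdFinEquiv.symm.trans <| (Equiv.refl _).prodCongr <|
      finProdFinEquiv.symm.trans <| finTwoEquiv.prodCongr (Equiv.refl _)

lemma cliqueEquiv_fst_eq_and_fst_eq_iff {Q h : ℕ} [NeZero Q] {x y : Fin (Q * (h * (2 * h)))} :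
    (cliqueEquiv Q h x).1 = (cliqueEquiv Q h y).1 ∧
        (cliqueEquiv Q h x).2.1 = (cliqueEquiv Q h y).2.1 ↔
      x.val / (2 * h) = y.val / (2 * h) := by
  simp only [cliqueEquiv, Equiv.trans_apply, finProdFinEquiv_symm_apply, Equiv.prodCongr_apply,
    Prod.map_fst, Prod.map_snd, Equiv.coe_refl, id, EmbeddingLike.apply_eq_iff_eq, Fin.ext_iff,
    Fin.coe_divNat, Fin.coe_modNat, Nat.mod_mul_left_div_self]
  simp only [mul_comm h (2 * h), ← Nat.div_div_eq_div_mul]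
  exact ⟨fun h => Nat.ext_div_mod h.1 h.2, fun h => by rw [h]; exact ⟨rfl, rfl⟩⟩

theorem exists_isPartialStarDecompOn_top_leaveOf_eq {Q h : ℕ} (hodd : Odd Q) (hQ : 3 ≤ Q)
    (L : SimpleGraph (Fin (Q * (h * (2 * h)))))
    (hL : ∀ x y, L.Adj x y ↔ x ≠ y ∧ x.val / (2 * h) = y.val / (2 * h)) :
    ∃ D, IsPartialStarDecompOn ⊤ (h * (2 * h)) D ∧ leaveOf ⊤ D = L := by
  have : NeZero Q := ⟨by omega⟩
  set e := cliqueEquiv Q h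
  have hcard : Fintype.card (Fin h × Bool × Fin h) = h * (2 * h) := by simp
  obtain ⟨S, -, hS⟩ := exists_subset_card_eq (s := (univ : Finset (Fin h × Bool × Fin h)))
    (n := h * (2 * h) - (h - 1) * h) (by rw [card_univ, hcard]; exact Nat.sub_le _ _)
  set O : Fin _ → Fin _ → Prop := fun x y => cyclicOrient halfOrient S (e x) (e y)
  have hRS (p : Fin h × Bool × Fin h) :
      Fintype.card (Fin h × Bool × Fin h) ∣ #{q | halfOrient p q} + #S := by
    rw [card_filter_halfOrient, hS, Fintype.card_fin, hcard, mul_comm (h - 1),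
      Nat.add_sub_cancel' (Nat.mul_le_mul_left h (by omega))]
  have hdvd : ∀ x, h * (2 * h) ∣ #{y | O x y} := fun x => by
    rw [card_equiv e (t := {w | cyclicOrient halfOrient S (e x) w}) (by simp [O])]
    simpa [hcard] using card_dvd_card_filter_cyclicOrient (by omega) hRS (e x)
  obtain ⟨D, hD, hleave⟩ := exists_isPartialStarDecompOn_top_of_orientation (h * (2 * h)) O
    (fun x y => cyclicOrient_asymm (fun _ _ => halfOrient_asymm) hQ hodd) hdvd
  refine ⟨D, hD, ?_⟩
  ext x y
  have := cyclicOrient_or_cyclicOrient_iff (R := halfOrient) (S := S) hQ (x := e x) (y := e y)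
  rw [halfOrient_or_halfOrient_iff] at this
  rw [hleave, hL, ← cliqueEquiv_fst_eq_and_fst_eq_iff]
  tauto

lemma Nat.dvd_choose_two_of_two_mul_dvd {k N : ℕ} (h : 2 * k ∣ N) : k ∣ N.choose 2 := by
  obtain ⟨j, rfl⟩ := h
  rw [Nat.choose_two_right, show 2 * k * j * (2 * k * j - 1) = 2 * (k * (j * (2 * k * j - 1))) by
    ring, Nat.mul_div_cancel_left _ two_pos]
  exact dvd_mul_right _ _

/-- for `k = 2^t` with `t ≥ 7` odd, `m = √(2k)` and `n = km/4 - k`, the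
disjoint union `L` of `n/m` copies of `K_m` is the leave of a partial `k`-star decomposition
of `K_n`, `k ∣ C(n+k,2)`, yet `L ∨ K_k` has no `k`-star decomposition. -/
theorem stmt14 (t k m n : ℕ) (ht : Odd t) (ht7 : 7 ≤ t) (hkt : k = 2 ^ t)
    (hm : m * m = 2 * k) (hn : 4 * (n + k) = k * m)
    (L : SimpleGraph (Fin n))
    (hL : ∀ x y : Fin n, L.Adj x y ↔ x ≠ y ∧ x.val / m = y.val / m) :
    (∃ D, IsPartialStarDecompOn (⊤ : SimpleGraph (Fin n)) k D ∧
        leaveOf (⊤ : SimpleGraph (Fin n)) D = L) ∧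
    k ∣ Nat.choose (n + k) 2 ∧
    ¬ ∃ D, IsStarDecompOn (joinK L k) k D := by
  obtain ⟨w, rfl⟩ : ∃ w, t = 2 * w + 5 := ⟨t / 2 - 2, by obtain ⟨r, rfl⟩ := ht; omega⟩
  obtain ⟨c, hc⟩ : ∃ c, 2 ^ w = c + 1 :=
    ⟨2 ^ w - 1, by have := Nat.one_le_two_pow (n := w); omega⟩
  have hc1 : 1 ≤ c := by have := Nat.le_self_pow (n := w) (by omega) 2; omega
  -- `h = 4 (c + 1)`, `k = 2h²`, `m = 2h`, `n = (2c + 1) k`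
  have hk : k = 4 * (c + 1) * (2 * (4 * (c + 1))) := by
    rw [hkt, show 2 ^ (2 * w + 5) = 32 * 2 ^ w * 2 ^ w by ring, hc]; ring
  have hm' : m = 2 * (4 * (c + 1)) := Nat.mul_self_inj.1 (by rw [hm, hk]; ring)
  subst hk hm'
  obtain rfl : n = (2 * c + 1) * (4 * (c + 1) * (2 * (4 * (c + 1)))) := by nlinarith
  exact ⟨exists_isPartialStarDecompOn_top_leaveOf_eq ⟨c, rfl⟩ (by omega) L hL,
    Nat.dvd_choose_two_of_two_mul_dvd ⟨c + 1, by ring⟩,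
    not_exists_isStarDecompOn_joinK hm hn (by positivity) ⟨(2 * c + 1) * (4 * (c + 1)), by ring⟩
      L hL⟩
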